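/- Let -1 < β < 1 and define F(α) = ∫_{-1}^{α} √(α - x) / (π √((x+1)(β - x)(1 - x))) dx for α ∈ [-1, β]. Then F is continuous and strictly increasing on [-1, β], with F(-1) = 0. -/
import Mathlib

open MeasureTheory Set

namespace Stmt14Aux

noncomputable def g (β α x : ℝ) : ℝ :=
  Real.sqrt (α - x) / (Real.pi * Real.sqrt ((x + 1) * (β - x) * (1 - x)))

lemma g_nonneg (β α x : ℝ) : 0 ≤ g β α x :=
  div_nonneg (Real.sqrt_nonneg _) (mul_nonneg Real.pi_pos.le (Real.sqrt_nonneg _))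

lemma g_zero (β α x : ℝ) (h : α ≤ x) : g β α x = 0 := by
  unfold g
  rw [Real.sqrt_eq_zero'.mpr (by linarith), zero_div]

lemma g_mono (β x : ℝ) {α₁ α₂ : ℝ} (h : α₁ ≤ α₂) : g β α₁ x ≤ g β α₂ x := by
  unfold g
  rcases eq_or_lt_of_le (mul_nonneg Real.pi_pos.le
    (Real.sqrt_nonneg ((x + 1) * (β - x) * (1 - x)))) with hd | hd
  · rw [← hd, div_zero, div_zero]
  · exact (div_le_div_iff_of_pos_right hd).mpr (Real.sqrt_le_sqrt (by linarith))

/-- The key pointwise bound by an integrable power function. -/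
lemma g_le {β α x : ℝ} (hβ₂ : β < 1) (hα : α ≤ β) (hx₁ : -1 < x) (hxβ : x ≤ β) :
    g β α x ≤ (Real.pi * Real.sqrt (1 - β))⁻¹ * (x + 1) ^ (-(1 / 2) : ℝ) := by
  have hx1 : (0:ℝ) < x + 1 := by linarith
  have hRHSpos : 0 ≤ (Real.pi * Real.sqrt (1 - β))⁻¹ * (x + 1) ^ (-(1 / 2) : ℝ) :=
    mul_nonneg (inv_nonneg.mpr (mul_nonneg Real.pi_pos.le (Real.sqrt_nonneg _)))
      (Real.rpow_nonneg hx1.le _)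
  rcases le_or_gt α x with hax | hax
  · rw [g_zero β α x hax]; exact hRHSpos
  · have hβx : 0 < β - x := by
      rcases lt_or_eq_of_le (hax.le.trans hα) with h | h
      · linarith
      · exact absurd h (by intro h; linarith)
    have h1x : 0 < 1 - x := by linarith
    have h1β : 0 < 1 - β := by linarith
    have hsqrt : Real.sqrt ((x + 1) * (β - x) * (1 - x))
        = Real.sqrt (x + 1) * Real.sqrt (β - x) * Real.sqrt (1 - x) := by
      rw [Real.sqrt_mul (by positivity), Real.sqrt_mul hx1.le]
    have hrpow : (x + 1) ^ (-(1 / 2) : ℝ) = (Real.sqrt (x + 1))⁻¹ := by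
      rw [Real.rpow_neg hx1.le, Real.sqrt_eq_rpow]
    unfold g
    rw [hsqrt, hrpow]
    have hs1 : 0 < Real.sqrt (x + 1) := Real.sqrt_pos.mpr hx1
    have hs2 : 0 < Real.sqrt (β - x) := Real.sqrt_pos.mpr hβx
    have hs3 : 0 < Real.sqrt (1 - x) := Real.sqrt_pos.mpr h1x
    have hs4 : 0 < Real.sqrt (1 - β) := Real.sqrt_pos.mpr h1β
    rw [← mul_inv, ← one_div, div_le_div_iff₀ (by positivity) (by positivity)]
    have key : Real.sqrt (α - x) * Real.sqrt (1 - β)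
        ≤ Real.sqrt (β - x) * Real.sqrt (1 - x) :=
      mul_le_mul (Real.sqrt_le_sqrt (by linarith)) (Real.sqrt_le_sqrt (by linarith))
        hs4.le hs2.le
    nlinarith [mul_le_mul_of_nonneg_right key (mul_pos Real.pi_pos hs1).le]

lemma g_measurable (β α : ℝ) : Measurable (g β α) := by
  apply Measurable.div
  · exact (Real.continuous_sqrt.comp (continuous_const.sub continuous_id)).measurable
  · exact (continuous_const.mul (Real.continuous_sqrt.comp (by continuity))).measurable

lemma bound_integrableOn {β : ℝ} (hβ₁ : -1 < β) :
    IntegrableOn (fun x : ℝ => (Real.pi * Real.sqrt (1 - β))⁻¹ * (x + 1) ^ (-(1 / 2) : ℝ))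
      (Ioc (-1) β) := by
  have h0 : IntervalIntegrable (fun x : ℝ => x ^ (-(1 / 2) : ℝ)) volume 0 (β + 1) :=
    intervalIntegral.intervalIntegrable_rpow' (by norm_num)
  have h1 := h0.comp_add_right 1
  simp only [zero_sub, add_sub_cancel_right] at h1
  have h2 : IntervalIntegrable (fun x : ℝ => (x + 1) ^ (-(1 / 2) : ℝ)) volume (-1) β := by
    simpa using h1
  rw [intervalIntegrable_iff_integrableOn_Ioc_of_le (by linarith)] at h2
  exact h2.const_mul _

lemma g_integrableOn {β α : ℝ} (hβ₁ : -1 < β) (hβ₂ : β < 1) (hα : α ≤ β) :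
    IntegrableOn (g β α) (Ioc (-1) β) := by
  apply Integrable.mono (bound_integrableOn hβ₁) (g_measurable β α).aestronglyMeasurable
  filter_upwards [ae_restrict_mem measurableSet_Ioc] with x hx
  rw [Real.norm_eq_abs, abs_of_nonneg (g_nonneg β α x), Real.norm_eq_abs,
    abs_of_nonneg (mul_nonneg (inv_nonneg.mpr (mul_nonneg Real.pi_pos.le (Real.sqrt_nonneg _)))
      (Real.rpow_nonneg (by linarith [hx.1] : (0:ℝ) ≤ x + 1) _))]
  exact g_le hβ₂ hα hx.1 hx.2

lemma g_intervalIntegrable {β α c d : ℝ} (hβ₁ : -1 < β) (hβ₂ : β < 1) (hα : α ≤ β)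
    (hc : -1 ≤ c) (hcd : c ≤ d) (hd : d ≤ β) :
    IntervalIntegrable (g β α) volume c d := by
  rw [intervalIntegrable_iff_integrableOn_Ioc_of_le hcd]
  exact (g_integrableOn hβ₁ hβ₂ hα).mono_set (Ioc_subset_Ioc hc hd)

lemma F_eq {β α : ℝ} (hβ₁ : -1 < β) (hβ₂ : β < 1) (hα₁ : -1 ≤ α) (hα₂ : α ≤ β) :
    (∫ x in (-1:ℝ)..α, g β α x) = ∫ x in Ioc (-1:ℝ) β, g β α x := by
  have h1 : (∫ x in α..β, g β α x) = 0 := by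
    rw [intervalIntegral.integral_congr (g := fun _ => (0:ℝ))
      (fun x hx => g_zero β α x (by
        rw [uIcc_of_le hα₂] at hx; exact hx.1))]
    simp
  have h2 := intervalIntegral.integral_add_adjacent_intervals
    (g_intervalIntegrable hβ₁ hβ₂ hα₂ le_rfl hα₁ hα₂)
    (g_intervalIntegrable hβ₁ hβ₂ hα₂ hα₁ hα₂ le_rfl)
  rw [h1, add_zero] at h2
  rw [h2, intervalIntegral.integral_of_le (by linarith)]

end Stmt14Aux

open Stmt14Aux in
theorem stmt14 (β : ℝ) (hβ₁ : -1 < β) (hβ₂ : β < 1) (F : ℝ → ℝ)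
    (hF : ∀ α, F α =
      ∫ x in (-1 : ℝ)..α,
        Real.sqrt (α - x) / (Real.pi * Real.sqrt ((x + 1) * (β - x) * (1 - x)))) :
    ContinuousOn F (Set.Icc (-1) β) ∧ StrictMonoOn F (Set.Icc (-1) β) ∧ F (-1) = 0 := by
  have hFg : ∀ α ∈ Set.Icc (-1:ℝ) β, F α = ∫ x in Ioc (-1:ℝ) β, g β α x := by
    intro α hα
    rw [hF α]
    exact F_eq hβ₁ hβ₂ hα.1 hα.2
  refine ⟨?_, ?_, ?_⟩
  · -- continuity
    have : ContinuousOn (fun α => ∫ x in Ioc (-1:ℝ) β, g β α x) (Set.Icc (-1) β) := by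
      apply continuousOn_of_dominated
        (bound := fun x => (Real.pi * Real.sqrt (1 - β))⁻¹ * (x + 1) ^ (-(1 / 2) : ℝ))
      · intro α _
        exact (g_measurable β α).aestronglyMeasurable
      · intro α hα
        filter_upwards [ae_restrict_mem measurableSet_Ioc] with x hx
        rw [Real.norm_eq_abs, abs_of_nonneg (g_nonneg β α x)]
        exact g_le hβ₂ hα.2 hx.1 hx.2
      · exact bound_integrableOn hβ₁
      · filter_upwards with x
        apply Continuous.continuousOn
        exact (Real.continuous_sqrt.comp (continuous_id.sub continuous_const)).div_const _
    exact this.congr hFg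
  · -- strict monotonicity
    intro a ha b hb hab
    rw [hF a, hF b]
    have hIa : IntervalIntegrable (g β a) volume (-1) a :=
      g_intervalIntegrable hβ₁ hβ₂ ha.2 le_rfl ha.1 ha.2
    have hIb1 : IntervalIntegrable (g β b) volume (-1) a :=
      g_intervalIntegrable hβ₁ hβ₂ hb.2 le_rfl ha.1 ha.2
    have hIb2 : IntervalIntegrable (g β b) volume a b :=
      g_intervalIntegrable hβ₁ hβ₂ hb.2 ha.1 hab.le hb.2
    have hsplit := intervalIntegral.integral_add_adjacent_intervals hIb1 hIb2
    have hmono : (∫ x in (-1:ℝ)..a, g β a x) ≤ ∫ x in (-1:ℝ)..a, g β b x :=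
      intervalIntegral.integral_mono_on ha.1 hIa hIb1 (fun x _ => g_mono β x hab.le)
    have hpos : 0 < ∫ x in a..b, g β b x := by
      apply intervalIntegral.intervalIntegral_pos_of_pos_on hIb2 _ hab
      intro x hx
      have hx1 : (0:ℝ) < x + 1 := by have := ha.1; linarith [hx.1]
      have hbx : 0 < b - x := by linarith [hx.2]
      have hβx : 0 < β - x := lt_of_lt_of_le hbx (by linarith [hb.2])
      have h1x : 0 < 1 - x := by nlinarith [hb.2, hx.2]
      exact div_pos (Real.sqrt_pos.mpr hbx)
        (mul_pos Real.pi_pos (Real.sqrt_pos.mpr (by positivity)))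
    calc (∫ x in (-1:ℝ)..a, g β a x) ≤ ∫ x in (-1:ℝ)..a, g β b x := hmono
      _ < (∫ x in (-1:ℝ)..a, g β b x) + ∫ x in a..b, g β b x := by linarith
      _ = ∫ x in (-1:ℝ)..b, g β b x := hsplit
  · rw [hF (-1), intervalIntegral.integral_same]
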